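/- arXiv:math/9806011 — 5 statements merged into one kernel-verified Lean document; each statement's English description precedes it below -/
import Mathlib

section
/- Let t ≥ 2 be an integer and let k be a positive rational number such that 2k is an integer. Then k · t² · ∏_{p prime, p ∣ t} (1 + p⁻²) = 10 if and only if (t, k) = (2, 2), (t, k) = (3, 1), or (t, k) = (4, 1/2). -/
/-!
The equation forces `k > 0`, so the integer `2k` is at least `1`. Since every Euler factor
`1 + p⁻²` is at least `1`, this gives `t² / 2 ≤ 10` and hence `t ≤ 4`. The three remaining
values of `t` are checked by computing their prime factors.
-/

lemma one_le_prod_one_add_inv_sq {K : Type*} [Field K] [LinearOrder K] [IsStrictOrderedRing K]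
    (s : Finset ℕ) : 1 ≤ ∏ p ∈ s, (1 + ((p : K) ^ 2)⁻¹) :=
  Finset.one_le_prod fun _ _ => le_add_of_nonneg_right (by positivity)

lemma half_le_of_two_mul_eq_intCast {K : Type*} [Field K] [LinearOrder K] [IsStrictOrderedRing K]
    {k : K} (hk : 0 < k) {m : ℤ} (hm : 2 * k = m) : 1 / 2 ≤ k := by
  have hm_pos : (0 : K) < m := hm ▸ by positivity
  have hm_one : (1 : K) ≤ m := by exact_mod_cast Int.cast_pos.mp hm_pos
  linarith

lemma le_four_of_mul_sq_mul_prod_eq_ten {t : ℕ} {k : ℚ} {m : ℤ} (hm : 2 * k = m)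
    (h : k * (t : ℚ) ^ 2 * ∏ p ∈ t.primeFactors, (1 + ((p : ℚ) ^ 2)⁻¹) = 10) : t ≤ 4 := by
  set P := ∏ p ∈ t.primeFactors, (1 + ((p : ℚ) ^ 2)⁻¹)
  have hP : 1 ≤ P := one_le_prod_one_add_inv_sq _
  have hk : 0 < k := by
    by_contra! hk
    nlinarith [mul_nonpos_of_nonpos_of_nonneg hk (by positivity : 0 ≤ (t : ℚ) ^ 2 * P)]
  have hk_half := half_le_of_two_mul_eq_intCast hk hm
  have ht_sq : (t : ℚ) ^ 2 / 2 ≤ 10 := calc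
    (t : ℚ) ^ 2 / 2 ≤ k * (t : ℚ) ^ 2 := by nlinarith [sq_nonneg (t : ℚ)]
    _ ≤ k * (t : ℚ) ^ 2 * P := le_mul_of_one_le_right (by positivity) hP
    _ = 10 := h
  have ht_sq : t ^ 2 ≤ 20 := by exact_mod_cast (by linarith : (t : ℚ) ^ 2 ≤ 20)
  nlinarith

theorem weight_classification_general (t : ℕ) (ht : 2 ≤ t) (k : ℚ)
    (hk2 : ∃ m : ℤ, 2 * k = (m : ℚ)) :
    k * (t : ℚ) ^ 2 * ∏ p ∈ t.primeFactors, (1 + ((p : ℚ) ^ 2)⁻¹) = 10 ↔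
      (t = 2 ∧ k = 2) ∨ (t = 3 ∧ k = 1) ∨ (t = 4 ∧ k = 1 / 2) := by
  constructor
  · intro h
    obtain ⟨m, hm⟩ := hk2
    have ht4 := le_four_of_mul_sq_mul_prod_eq_ten hm h
    interval_cases t <;> simp [Nat.primeFactors] at h ⊢ <;> linarith
  · rintro (⟨rfl, rfl⟩ | ⟨rfl, rfl⟩ | ⟨rfl, rfl⟩) <;> simp [Nat.primeFactors] <;> norm_num

/-- Let `t ≥ 2` be an integer and let `k` be a positive rational number
such that `2k` is an integer. Then `k · t² · ∏_{p prime, p ∣ t} (1 + p⁻²) = 10` if and only if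
`(t, k) = (2, 2)`, `(t, k) = (3, 1)`, or `(t, k) = (4, 1/2)`. -/
theorem weight_classification (t : ℕ) (ht : 2 ≤ t) (k : ℚ) (hk : 0 < k)
    (hk2 : ∃ m : ℤ, 2 * k = (m : ℚ)) :
    k * (t : ℚ) ^ 2 * ∏ p ∈ t.primeFactors, (1 + ((p : ℚ) ^ 2)⁻¹) = 10 ↔
      (t = 2 ∧ k = 2) ∨ (t = 3 ∧ k = 1) ∨ (t = 4 ∧ k = 1 / 2) :=
  weight_classification_general t ht k hk2
end

section
/- Let t ≥ 1 be an integer and let g, h ∈ Sp(4,ℤ). Then g and h lie in the same left coset of ₀Γ'_t (i.e. g·h⁻¹ ∈ ₀Γ'_t) if and only if there exists a unit u ∈ (ℤ/tℤ)ˣ such that the fourth row of g is congruent modulo t to u times the fourth row of h. -/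
open Matrix

noncomputable section

abbrev M4 : Type := Matrix (Fin 4) (Fin 4) ℚ

def Jmat : M4 := !![0,0,1,0; 0,0,0,1; -1,0,0,0; 0,-1,0,0]

/-- Exponent pattern of the paramodular group `Γ_t`: the `(i,j)` entry of an element
lies in `t^(pexp i j) ℤ`. -/
def pexp : Matrix (Fin 4) (Fin 4) ℤ := !![0,0,0,1; 1,0,1,1; 0,0,0,1; 0,-1,0,0]

lemma pexp_triangle : ∀ i k j : Fin 4, pexp i j ≤ pexp i k + pexp k j := by decide

lemma pexp_diag : ∀ i : Fin 4, pexp i i = 0 := by decide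

def rho : Fin 4 → Fin 4 := ![2,3,0,1]
def sgn : Fin 4 → ℤ := ![1,1,-1,-1]
def tgn : Fin 4 → ℤ := ![-1,-1,1,1]

lemma pexp_rho : ∀ i j : Fin 4, pexp (rho j) (rho i) = pexp i j := by
  intro i j; fin_cases i <;> fin_cases j <;> decide

lemma Jmat_mul_Jmat : Jmat * Jmat = -1 := by
  ext i j
  fin_cases i <;> fin_cases j <;>
    simp [Jmat, Matrix.mul_apply, Fin.sum_univ_four, Matrix.one_apply, Matrix.vecHead, Matrix.vecTail]

lemma sympl_form_inv (g : GL (Fin 4) ℚ) (hg : (g : M4)ᵀ * Jmat * (g : M4) = Jmat) :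
    ((g⁻¹ : GL (Fin 4) ℚ) : M4) = -(Jmat * (g : M4)ᵀ * Jmat) := by
  have h1 : (-(Jmat * (g : M4)ᵀ * Jmat)) * (g : M4) = 1 := by
    have h2 : (-(Jmat * (g : M4)ᵀ * Jmat)) * (g : M4) =
        -(Jmat * ((g : M4)ᵀ * Jmat * (g : M4))) := by noncomm_ring
    rw [h2, hg, Jmat_mul_Jmat]
    simp
  calc ((g⁻¹ : GL (Fin 4) ℚ) : M4) = 1 * ((g⁻¹ : GL (Fin 4) ℚ) : M4) := (one_mul _).symm
    _ = ((-(Jmat * (g : M4)ᵀ * Jmat)) * (g : M4)) * ((g⁻¹ : GL (Fin 4) ℚ) : M4) := by rw [h1]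
    _ = (-(Jmat * (g : M4)ᵀ * Jmat)) * ((g : M4) * ((g⁻¹ : GL (Fin 4) ℚ) : M4)) := by
        rw [mul_assoc]
    _ = -(Jmat * (g : M4)ᵀ * Jmat) := by rw [Units.mul_inv]; rw [mul_one]

lemma inv_entry (g : GL (Fin 4) ℚ) (hg : (g : M4)ᵀ * Jmat * (g : M4) = Jmat) (i j : Fin 4) :
    ((g⁻¹ : GL (Fin 4) ℚ) : M4) i j =
      -((sgn i : ℚ) * (tgn j : ℚ) * (g : M4) (rho j) (rho i)) := by
  rw [sympl_form_inv g hg]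
  fin_cases i <;> fin_cases j <;>
    simp [Jmat, rho, sgn, tgn, Matrix.mul_apply, Fin.sum_univ_four, Matrix.vecHead,
      Matrix.vecTail, Matrix.vecMul, dotProduct]

/-- A rational matrix has integer entries. -/
def IntM (A : M4) : Prop := ∀ i j, ∃ n : ℤ, A i j = (n : ℚ)

lemma IntM.mul {A B : M4} (hA : IntM A) (hB : IntM B) : IntM (A * B) := by
  intro i j
  have key : ∀ k, ∃ n : ℤ, A i k * B k j = (n : ℚ) := fun k => by
    obtain ⟨p, hp⟩ := hA i k
    obtain ⟨q, hq⟩ := hB k j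
    exact ⟨p * q, by rw [hp, hq]; push_cast; ring⟩
  choose f hf using key
  refine ⟨∑ k, f k, ?_⟩
  rw [Matrix.mul_apply, Finset.sum_congr rfl (fun k _ => hf k)]
  push_cast
  rfl

lemma IntM.transpose {A : M4} (hA : IntM A) : IntM Aᵀ := fun i j => hA j i

lemma IntM.neg {A : M4} (hA : IntM A) : IntM (-A) := fun i j => by
  obtain ⟨n, hn⟩ := hA i j
  exact ⟨-n, by rw [Matrix.neg_apply, hn]; push_cast; ring⟩

lemma IntM.one : IntM 1 := fun i j => by
  by_cases h : i = j
  · exact ⟨1, by simp [Matrix.one_apply, h]⟩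
  · exact ⟨0, by simp [Matrix.one_apply, h]⟩

def JmatZ : Matrix (Fin 4) (Fin 4) ℤ := !![0,0,1,0; 0,0,0,1; -1,0,0,0; 0,-1,0,0]

lemma Jmat_eq_map : Jmat = JmatZ.map (Int.cast : ℤ → ℚ) := by
  ext i j
  fin_cases i <;> fin_cases j <;> simp [Jmat, JmatZ, Matrix.vecHead, Matrix.vecTail]

lemma IntM.Jmat : IntM Jmat := fun i j =>
  ⟨JmatZ i j, by rw [Jmat_eq_map]; simp [Matrix.map_apply]⟩

/-- `Sp(4,ℤ)`: the subgroup of `GL(4,ℚ)` of integer matrices `g` with `gᵀ J g = J`. -/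
def Sp4Z : Subgroup (GL (Fin 4) ℚ) where
  carrier := {g | IntM (g : M4) ∧ (g : M4)ᵀ * Jmat * (g : M4) = Jmat}
  one_mem' := ⟨by rw [Units.val_one]; exact IntM.one, by simp⟩
  mul_mem' := by
    rintro a b ⟨hai, haf⟩ ⟨hbi, hbf⟩
    constructor
    · rw [Units.val_mul]; exact hai.mul hbi
    · rw [Units.val_mul, transpose_mul]
      calc (b : M4)ᵀ * (a : M4)ᵀ * Jmat * ((a : M4) * (b : M4))
          = (b : M4)ᵀ * ((a : M4)ᵀ * Jmat * (a : M4)) * (b : M4) := by noncomm_ring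
        _ = Jmat := by rw [haf, hbf]
  inv_mem' := by
    rintro a ⟨hai, haf⟩
    constructor
    · rw [sympl_form_inv a haf]
      exact (((IntM.Jmat.mul hai.transpose).mul IntM.Jmat)).neg
    · have h1 : ((a : M4) * ((a⁻¹ : GL (Fin 4) ℚ) : M4)) = 1 := Units.mul_inv a
      calc ((a⁻¹ : GL (Fin 4) ℚ) : M4)ᵀ * Jmat * ((a⁻¹ : GL (Fin 4) ℚ) : M4)
          = ((a⁻¹ : GL (Fin 4) ℚ) : M4)ᵀ * ((a : M4)ᵀ * Jmat * (a : M4)) *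
              ((a⁻¹ : GL (Fin 4) ℚ) : M4) := by rw [haf]
        _ = ((a : M4) * ((a⁻¹ : GL (Fin 4) ℚ) : M4))ᵀ * Jmat *
              ((a : M4) * ((a⁻¹ : GL (Fin 4) ℚ) : M4)) := by
            rw [transpose_mul]; noncomm_ring
        _ = Jmat := by rw [h1]; simp

/-- The paramodular group `Γ_t`: the subgroup of `Sp(4,ℚ)` of matrices whose entries are
integers except possibly the `(4,2)` entry, which lies in `t⁻¹ℤ`, and whose entries at
positions `(1,4)`, `(2,1)`, `(2,3)`, `(2,4)`, `(3,4)` lie in `tℤ`. -/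
def Gamma (t : ℕ) (ht : t ≠ 0) : Subgroup (GL (Fin 4) ℚ) where
  carrier := {g | (g : M4)ᵀ * Jmat * (g : M4) = Jmat ∧
    ∀ i j, ∃ n : ℤ, (g : M4) i j = (n : ℚ) * (t : ℚ) ^ (pexp i j)}
  one_mem' := by
    constructor
    · simp
    · intro i j
      by_cases hij : i = j
      · subst hij
        exact ⟨1, by simp [Units.val_one, Matrix.one_apply, pexp_diag]⟩
      · exact ⟨0, by simp [Units.val_one, Matrix.one_apply, hij]⟩
  mul_mem' := by
    rintro a b ⟨haf, hap⟩ ⟨hbf, hbp⟩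
    have htq : (t : ℚ) ≠ 0 := Nat.cast_ne_zero.mpr ht
    constructor
    · rw [Units.val_mul, transpose_mul]
      calc (b : M4)ᵀ * (a : M4)ᵀ * Jmat * ((a : M4) * (b : M4))
          = (b : M4)ᵀ * ((a : M4)ᵀ * Jmat * (a : M4)) * (b : M4) := by noncomm_ring
        _ = Jmat := by rw [haf, hbf]
    · intro i j
      have key : ∀ k : Fin 4, ∃ n : ℤ,
          (a : M4) i k * (b : M4) k j = (n : ℚ) * (t : ℚ) ^ (pexp i j) := by
        intro k
        obtain ⟨p, hp⟩ := hap i k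
        obtain ⟨q, hq⟩ := hbp k j
        refine ⟨p * q * (t : ℤ) ^ (pexp i k + pexp k j - pexp i j).toNat, ?_⟩
        have hd : (0 : ℤ) ≤ pexp i k + pexp k j - pexp i j := by
          have := pexp_triangle i k j; omega
        have hcast : ((p * q * (t : ℤ) ^ (pexp i k + pexp k j - pexp i j).toNat : ℤ) : ℚ)
            = (p : ℚ) * (q : ℚ) * (t : ℚ) ^ (pexp i k + pexp k j - pexp i j) := by
          push_cast
          rw [← zpow_natCast (t : ℚ), Int.toNat_of_nonneg hd]
        have hpow : (t : ℚ) ^ (pexp i k + pexp k j - pexp i j) * (t : ℚ) ^ (pexp i j)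
            = (t : ℚ) ^ (pexp i k) * (t : ℚ) ^ (pexp k j) := by
          rw [← zpow_add₀ htq, ← zpow_add₀ htq]
          congr 1
          ring
        rw [hp, hq, hcast, mul_assoc ((p : ℚ) * (q : ℚ)), hpow]
        ring
      choose f hf using key
      refine ⟨∑ k, f k, ?_⟩
      rw [Units.val_mul, Matrix.mul_apply, Finset.sum_congr rfl (fun k _ => hf k),
        ← Finset.sum_mul]
      push_cast
      ring
  inv_mem' := by
    rintro a ⟨haf, hap⟩
    refine ⟨?_, ?_⟩
    · have h1 : ((a : M4) * ((a⁻¹ : GL (Fin 4) ℚ) : M4)) = 1 := Units.mul_inv a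
      calc ((a⁻¹ : GL (Fin 4) ℚ) : M4)ᵀ * Jmat * ((a⁻¹ : GL (Fin 4) ℚ) : M4)
          = ((a⁻¹ : GL (Fin 4) ℚ) : M4)ᵀ * ((a : M4)ᵀ * Jmat * (a : M4)) *
              ((a⁻¹ : GL (Fin 4) ℚ) : M4) := by rw [haf]
        _ = ((a : M4) * ((a⁻¹ : GL (Fin 4) ℚ) : M4))ᵀ * Jmat *
              ((a : M4) * ((a⁻¹ : GL (Fin 4) ℚ) : M4)) := by
            rw [transpose_mul]; noncomm_ring
        _ = Jmat := by rw [h1]; simp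
    · intro i j
      obtain ⟨n, hn⟩ := hap (rho j) (rho i)
      refine ⟨-(sgn i * tgn j * n), ?_⟩
      rw [inv_entry a haf i j, hn, ← pexp_rho i j]
      push_cast
      ring

/-- The matrix `I_t = diag(1, t⁻¹, 1, t)` as an element of `GL(4,ℚ)`. -/
def It (t : ℕ) (ht : t ≠ 0) : GL (Fin 4) ℚ where
  val := diagonal ![1, (t : ℚ)⁻¹, 1, (t : ℚ)]
  inv := diagonal ![1, (t : ℚ), 1, (t : ℚ)⁻¹]
  val_inv := by
    have htq : (t : ℚ) ≠ 0 := Nat.cast_ne_zero.mpr ht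
    rw [diagonal_mul_diagonal]
    ext i j
    fin_cases i <;> fin_cases j <;>
      simp [Matrix.diagonal_apply, Matrix.one_apply, Matrix.vecHead, Matrix.vecTail,
        inv_mul_cancel₀ htq, mul_inv_cancel₀ htq]
  inv_val := by
    have htq : (t : ℚ) ≠ 0 := Nat.cast_ne_zero.mpr ht
    rw [diagonal_mul_diagonal]
    ext i j
    fin_cases i <;> fin_cases j <;>
      simp [Matrix.diagonal_apply, Matrix.one_apply, Matrix.vecHead, Matrix.vecTail,
        inv_mul_cancel₀ htq, mul_inv_cancel₀ htq]

/-- The conjugated paramodular group `Γ'_t = I_t Γ_t I_t⁻¹`. -/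
def Gamma' (t : ℕ) (ht : t ≠ 0) : Subgroup (GL (Fin 4) ℚ) :=
  (Gamma t ht).map (MulAut.conj (It t ht)).toMonoidHom

/-!
Put `k = g h⁻¹ ∈ Sp(4,ℤ)` and reduce modulo `t`. Since `I_t = diag(t^e)` with `e = (0,-1,0,1)`,
conjugation by `I_t` rescales the entry `(i,j)` by `t^(e_j - e_i)`, so an integral symplectic `k` lies in `Γ'_t` exactly when its entries at
`(1,2), (3,2), (4,1), (4,2), (4,3)` vanish mod `t` (1-based indices; `Fin 4` counts from 0). Since
`k J kᵀ = J`, the vanishing of `(4,1), (4,2), (4,3)` alone forces `k₄₄ k₂₂ ≡ 1` and then the other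
two conditions, so the condition says that the fourth row of `k` is `u e₄` for a unit `u`. As `h` is
invertible mod `t`, this holds iff the fourth row of `g = k h` is `u` times that of `h`.
-/

def reduceMod (t : ℕ) (A : M4) : Matrix (Fin 4) (Fin 4) (ZMod t) := A.map fun x => (x.num : ZMod t)

lemma IntM.intCast_num {A : M4} (hA : IntM A) (i j : Fin 4) : ((A i j).num : ℚ) = A i j := by
  obtain ⟨n, hn⟩ := hA i j
  rw [hn, Rat.num_intCast]

lemma reduceMod_mul (t : ℕ) {A B : M4} (hA : IntM A) (hB : IntM B) :
    reduceMod t (A * B) = reduceMod t A * reduceMod t B := by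
  ext i j
  have hAB : (A * B) i j = ((∑ k, (A i k).num * (B k j).num : ℤ) : ℚ) := by
    push_cast
    simp only [Matrix.mul_apply, hA.intCast_num, hB.intCast_num]
  rw [reduceMod, map_apply, hAB, Rat.num_intCast]
  simp [reduceMod, Matrix.mul_apply]

def Sp4Z.reduceModHom (t : ℕ) : Sp4Z →* Matrix (Fin 4) (Fin 4) (ZMod t) where
  toFun g := reduceMod t (g : GL (Fin 4) ℚ)
  map_one' := Matrix.map_one _ (by simp) (by simp)
  map_mul' g h := reduceMod_mul t g.2.1 h.2.1

def J4 (R : Type*) [Ring R] : Matrix (Fin 4) (Fin 4) R :=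
  !![0,0,1,0; 0,0,0,1; -1,0,0,0; 0,-1,0,0]

lemma J4_mul_J4 (R : Type*) [Ring R] : J4 R * J4 R = -1 := by
  ext i j
  fin_cases i <;> fin_cases j <;> simp [J4, Matrix.mul_apply, Fin.sum_univ_four]

lemma reduceMod_Jmat (t : ℕ) : reduceMod t Jmat = J4 (ZMod t) := by
  ext i j
  fin_cases i <;> fin_cases j <;> simp [reduceMod, Jmat, J4]

lemma mul_J4_mul_transpose_eq_J4 {R : Type*} [CommRing R] {K : Matrix (Fin 4) (Fin 4) R}
    (hK : Kᵀ * J4 R * K = J4 R) : K * J4 R * Kᵀ = J4 R := by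
  have hinv : K * (-(J4 R * Kᵀ * J4 R)) = 1 := by
    refine mul_eq_one_comm.mp ?_
    calc -(J4 R * Kᵀ * J4 R) * K = -(J4 R * (Kᵀ * J4 R * K)) := by noncomm_ring
      _ = 1 := by rw [hK, J4_mul_J4, neg_neg]
  calc K * J4 R * Kᵀ = K * (-(J4 R * Kᵀ * J4 R)) * J4 R := by
        simp only [Matrix.mul_neg, Matrix.neg_mul, Matrix.mul_assoc, J4_mul_J4, Matrix.mul_neg,
          Matrix.mul_one, neg_neg]
    _ = J4 R := by rw [hinv, Matrix.one_mul]

lemma Sp4Z.reduceMod_mul_J4_mul_transpose_eq_J4 (t : ℕ) {g : GL (Fin 4) ℚ} (hg : g ∈ Sp4Z) :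
    reduceMod t g * J4 (ZMod t) * (reduceMod t g)ᵀ = J4 (ZMod t) := by
  refine mul_J4_mul_transpose_eq_J4 ?_
  obtain ⟨hgI, hgS⟩ := hg
  have := congrArg (reduceMod t) hgS
  rwa [reduceMod_mul t (hgI.transpose.mul IntM.Jmat) hgI, reduceMod_mul t hgI.transpose IntM.Jmat,
    reduceMod_Jmat] at this

lemma Matrix.mul_row_eq_smul_row_iff {n R : Type*} [Fintype n] [DecidableEq n] [CommRing R]
    {K H : Matrix n n R} (hH : IsUnit H) (i : n) (c : R) :
    (K * H) i = c • H i ↔ K i = Pi.single i c := by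
  rw [mul_apply_eq_vecMul, show c • H i = Pi.single i c ᵥ* H from (single_vecMul H i c).symm]
  exact (vecMul_injective_of_isUnit hH).eq_iff

lemma mul_J4_mul_transpose_three_apply {R : Type*} [CommRing R]
    (K : Matrix (Fin 4) (Fin 4) R) (i : Fin 4) :
    (K * J4 R * Kᵀ) 3 i = K 3 0 * K i 2 + K 3 1 * K i 3 - K 3 2 * K i 0 - K 3 3 * K i 1 := by
  simp [J4, Matrix.mul_apply, Fin.sum_univ_four]
  ring

lemma exists_unit_row_three_eq_single_iff {R : Type*} [CommRing R]
    {K : Matrix (Fin 4) (Fin 4) R} (hK : K * J4 R * Kᵀ = J4 R) :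
    (∃ u : Rˣ, K 3 = Pi.single 3 (u : R)) ↔
      K 0 1 = 0 ∧ K 2 1 = 0 ∧ K 3 0 = 0 ∧ K 3 1 = 0 ∧ K 3 2 = 0 := by
  have hentry (i : Fin 4) (h0 : K 3 0 = 0) (h1 : K 3 1 = 0) (h2 : K 3 2 = 0) :
      K 3 3 * K i 1 = -J4 R 3 i := by
    rw [← hK, mul_J4_mul_transpose_three_apply, h0, h1, h2]
    ring
  constructor
  · rintro ⟨u, hu⟩
    have hK3 := congrFun hu
    simp only [Pi.single_apply] at hK3
    obtain ⟨h0, h1, h2, h3⟩ : K 3 0 = 0 ∧ K 3 1 = 0 ∧ K 3 2 = 0 ∧ K 3 3 = u := by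
      simp [hK3]
    have hcol (i : Fin 4) (hi : J4 R 3 i = 0) : K i 1 = 0 := by
      simpa [hi, h3] using hentry i h0 h1 h2
    exact ⟨hcol 0 (by simp [J4]), hcol 2 (by simp [J4]), h0, h1, h2⟩
  · rintro ⟨h01, h21, h0, h1, h2⟩
    have hunit : IsUnit (K 3 3) :=
      IsUnit.of_mul_eq_one (K 1 1) (by simpa [J4] using hentry 1 h0 h1 h2)
    refine ⟨hunit.unit, funext fun j => ?_⟩
    fin_cases j <;> simp [h0, h1, h2]

def evec : Fin 4 → ℤ := ![0, -1, 0, 1]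

def pexpConj (i j : Fin 4) : ℤ := pexp i j + evec i - evec j

lemma It_val (t : ℕ) (ht : t ≠ 0) :
    ((It t ht : GL (Fin 4) ℚ) : M4) = diagonal fun i => (t : ℚ) ^ evec i := by
  show diagonal _ = _
  congr 1; funext i; fin_cases i <;> simp [evec]

lemma It_inv_val (t : ℕ) (ht : t ≠ 0) :
    (((It t ht)⁻¹ : GL (Fin 4) ℚ) : M4) = diagonal fun i => (t : ℚ) ^ (-evec i) := by
  show diagonal _ = _
  congr 1; funext i; fin_cases i <;> simp [evec]

lemma diagonal_mul_Jmat_mul_diagonal {d : Fin 4 → ℚ} (h02 : d 0 * d 2 = 1) (h13 : d 1 * d 3 = 1) :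
    diagonal d * Jmat * diagonal d = Jmat := by
  ext i j
  fin_cases i <;> fin_cases j <;> simp [Jmat, diagonal, Matrix.mul_apply] <;>
    first | linear_combination h02 | linear_combination h13

lemma conj_It_apply (t : ℕ) (ht : t ≠ 0) (k : GL (Fin 4) ℚ) (i j : Fin 4) :
    (((It t ht)⁻¹ * k * It t ht : GL (Fin 4) ℚ) : M4) i j =
      (t : ℚ) ^ (-evec i) * (k : M4) i j * (t : ℚ) ^ evec j := by
  rw [Units.val_mul, Units.val_mul, It_inv_val, It_val, mul_diagonal, diagonal_mul]

lemma transpose_mul_Jmat_mul_conj_It (t : ℕ) (ht : t ≠ 0) {k : GL (Fin 4) ℚ}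
    (hk : (k : M4)ᵀ * Jmat * (k : M4) = Jmat) :
    (((It t ht)⁻¹ * k * It t ht : GL (Fin 4) ℚ) : M4)ᵀ * Jmat *
      (((It t ht)⁻¹ * k * It t ht : GL (Fin 4) ℚ) : M4) = Jmat := by
  have htq : (t : ℚ) ≠ 0 := Nat.cast_ne_zero.mpr ht
  set D := diagonal fun i => (t : ℚ) ^ evec i
  set D' := diagonal fun i => (t : ℚ) ^ (-evec i)
  have hD : D * Jmat * D = Jmat :=
    diagonal_mul_Jmat_mul_diagonal (by simp [evec]) (by simp [evec, htq])
  have hD' : D' * Jmat * D' = Jmat :=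
    diagonal_mul_Jmat_mul_diagonal (by simp [evec]) (by simp [evec, htq])
  rw [Units.val_mul, Units.val_mul, It_inv_val, It_val]
  calc (D' * (k : M4) * D)ᵀ * Jmat * (D' * (k : M4) * D)
      = D * ((k : M4)ᵀ * (D' * Jmat * D') * (k : M4)) * D := by
        simp only [transpose_mul, D, D', diagonal_transpose, Matrix.mul_assoc]
    _ = Jmat := by rw [hD', hk, hD]

lemma exists_int_mul_zpow_conj_iff {K : Type*} [Field K] {t : K} (ht : t ≠ 0) (x : K) (a b p : ℤ) :
    (∃ n : ℤ, t ^ (-a) * x * t ^ b = n * t ^ p) ↔ ∃ n : ℤ, x = n * t ^ (p + a - b) := by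
  refine exists_congr fun n => ?_
  have ha := zpow_ne_zero a ht
  have hb := zpow_ne_zero b ht
  rw [_root_.zpow_neg, zpow_sub₀ ht, zpow_add₀ ht]
  constructor <;> intro h
  · field_simp at h ⊢
    linear_combination h
  · rw [h]
    field_simp

lemma mem_Gamma'_iff_of_symplectic (t : ℕ) (ht : t ≠ 0) {k : GL (Fin 4) ℚ}
    (hk : (k : M4)ᵀ * Jmat * (k : M4) = Jmat) :
    k ∈ Gamma' t ht ↔ ∀ i j, ∃ n : ℤ, (k : M4) i j = n * (t : ℚ) ^ pexpConj i j := by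
  have htq : (t : ℚ) ≠ 0 := Nat.cast_ne_zero.mpr ht
  rw [Gamma', Subgroup.mem_map_equiv, MulAut.conj_symm_apply]
  refine (and_iff_right (transpose_mul_Jmat_mul_conj_It t ht hk)).trans <|
    forall₂_congr fun i j => ?_
  rw [conj_It_apply]
  exact exists_int_mul_zpow_conj_iff htq _ _ _ _

lemma exists_intCast_eq_mul_zpow_iff {t : ℕ} (ht : t ≠ 0) (m p : ℤ) (hp : p ≤ 1) :
    (∃ n : ℤ, (m : ℚ) = n * (t : ℚ) ^ p) ↔ (p = 1 → (m : ZMod t) = 0) := by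
  rcases hp.lt_or_eq with hp | rfl
  · refine iff_of_true ⟨m * t ^ (-p).toNat, ?_⟩ (by omega)
    have htq : (t : ℚ) ≠ 0 := Nat.cast_ne_zero.mpr ht
    rw [Int.cast_mul, Int.cast_pow, Int.cast_natCast, ← zpow_natCast,
      Int.toNat_of_nonneg (by omega), mul_assoc, ← zpow_add₀ htq, neg_add_cancel, zpow_zero,
      mul_one]
  · simp only [zpow_one, forall_const, ZMod.intCast_zmod_eq_zero_iff_dvd,
      dvd_iff_exists_eq_mul_left]
    exact exists_congr fun n => by exact_mod_cast Iff.rfl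

lemma pexpConj_le_one : ∀ i j, pexpConj i j ≤ 1 := by decide

lemma forall_pexpConj_eq_one_imp_iff (P : Fin 4 → Fin 4 → Prop) :
    (∀ i j, pexpConj i j = 1 → P i j) ↔ P 0 1 ∧ P 2 1 ∧ P 3 0 ∧ P 3 1 ∧ P 3 2 := by
  refine ⟨fun h => ⟨h 0 1 (by decide), h 2 1 (by decide), h 3 0 (by decide), h 3 1 (by decide),
    h 3 2 (by decide)⟩, fun ⟨h01, h21, h30, h31, h32⟩ i j hij => ?_⟩
  fin_cases i <;> fin_cases j <;> first | assumption | exact absurd hij (by decide)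

lemma Sp4Z.mem_Gamma'_iff_reduceMod (t : ℕ) (ht : t ≠ 0) {k : GL (Fin 4) ℚ} (hk : k ∈ Sp4Z) :
    k ∈ Gamma' t ht ↔ reduceMod t k 0 1 = 0 ∧ reduceMod t k 2 1 = 0 ∧
      reduceMod t k 3 0 = 0 ∧ reduceMod t k 3 1 = 0 ∧ reduceMod t k 3 2 = 0 := by
  rw [mem_Gamma'_iff_of_symplectic t ht hk.2,
    ← forall_pexpConj_eq_one_imp_iff fun i j => reduceMod t (k : M4) i j = 0]
  refine forall₂_congr fun i j => ?_
  rw [← hk.1.intCast_num i j]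
  exact exists_intCast_eq_mul_zpow_iff ht _ _ (pexpConj_le_one i j)

/-- Let `t ≥ 1` and `g, h ∈ Sp(4,ℤ)`.  Then `g` and `h` lie in the same left
coset of `₀Γ'_t = Γ'_t ∩ Sp(4,ℤ)` (i.e. `g·h⁻¹ ∈ ₀Γ'_t`) if and only if there is a unit
`u ∈ (ℤ/tℤ)ˣ` such that the fourth row of `g` is congruent modulo `t` to `u` times the fourth
row of `h`.  (Entries of elements of `Sp(4,ℤ)` are integer-valued rationals, and `Rat.num`
extracts the corresponding integer.) -/
theorem same_coset_iff_fourth_row (t : ℕ) (ht : 1 ≤ t) (g h : GL (Fin 4) ℚ)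
    (hg : g ∈ Sp4Z) (hh : h ∈ Sp4Z) :
    g * h⁻¹ ∈ Gamma' t (by omega) ⊓ Sp4Z ↔
      ∃ u : (ZMod t)ˣ, ∀ j : Fin 4,
        ((((g : M4) 3 j).num : ZMod t)) = (u : ZMod t) * (((h : M4) 3 j).num : ZMod t) := by
  set φ := Sp4Z.reduceModHom t
  have hk : g * h⁻¹ ∈ Sp4Z := mul_mem hg (inv_mem hh)
  have hφg : φ ⟨g, hg⟩ = φ ⟨g * h⁻¹, hk⟩ * φ ⟨h, hh⟩ := by
    rw [← map_mul]
    exact congrArg φ (Subtype.ext (inv_mul_cancel_right g h).symm)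
  have hφh : IsUnit (φ ⟨h, hh⟩) := (Group.isUnit _).map φ
  rw [Subgroup.mem_inf, and_iff_left hk, Sp4Z.mem_Gamma'_iff_reduceMod t _ hk,
    ← exists_unit_row_three_eq_single_iff (Sp4Z.reduceMod_mul_J4_mul_transpose_eq_J4 t hk)]
  refine exists_congr fun u => ?_
  change φ ⟨g * h⁻¹, hk⟩ 3 = _ ↔ _
  rw [← Matrix.mul_row_eq_smul_row_iff hφh, ← hφg, funext_iff]
  rfl
end
end

section
/- For every integer t ≥ 2, the number of orbits of the scalar multiplication action of the unit group (ℤ/tℤ)ˣ on the set of primitive vectors (a,b,c,d) ∈ (ℤ/tℤ)⁴ satisfying either a = c = 0 or b = d = 0 equals 2t · ∏_{p prime, p ∣ t} (1 + p⁻¹). -/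
/-!
The units of `ℤ/tℤ` act freely on primitive vectors, because a primitive vector has zero
annihilator; so the number of orbits is the number of vectors divided by `φ t`. The vectors with
`a = c = 0` or `b = d = 0` form two disjoint copies of the set of unimodular pairs `(x, y)`,
`IsCoprime x y`, in `ℤ/tℤ`. By the Chinese remainder theorem the number of unimodular pairs is
multiplicative in `t`, and since `ℤ/p^kℤ` is a local ring, a pair there is unimodular iff one of
its entries is a unit, which leaves `p^(2k) - p^(2k-2)` pairs. Altogether there are
`t² ∏ (1 - p⁻²)` of them, and dividing `2 t² ∏ (1 - p⁻²)` by `φ t = t ∏ (1 - p⁻¹)` gives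
the claim.
-/

/-- A vector `v ∈ (ℤ/tℤ)⁴` is primitive if its components generate `ℤ/tℤ` as an ideal. -/
def IsPrimitiveVec {t : ℕ} (v : Fin 4 → ZMod t) : Prop :=
  Ideal.span (Set.range v) = ⊤

open Nat MulAction

theorem Set.ncard_image_mul_of_ncard_fiber {α β : Type*} {f : α → β} {s : Set α}
    (hs : s.Finite) {n : ℕ} (hn : ∀ a ∈ s, {x ∈ s | f x = f a}.ncard = n) :
    (f '' s).ncard * n = s.ncard := by
  classical
  lift s to Finset α using hs
  have hfib : ∀ b ∈ s.image f, {a ∈ s | f a = b}.card = n := by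
    simp only [Finset.mem_image, forall_exists_index, and_imp]
    rintro _ a ha rfl
    rw [← hn a ha, ← Set.ncard_coe_finset]
    simp
  rw [← Finset.coe_image, Set.ncard_coe_finset, Set.ncard_coe_finset, mul_comm]
  exact le_antisymm (Finset.mul_card_image_le_card _ _ fun b hb => (hfib b hb).ge)
    (Finset.card_le_mul_card_image _ _ fun b hb => (hfib b hb).le)

theorem MulAction.ncard_image_orbit_mul_card {G α : Type*} [Group G] [Finite G] [MulAction G α]
    {s : Set α} (hs : s.Finite) (hinv : ∀ g : G, ∀ x ∈ s, g • x ∈ s)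
    (hfree : ∀ x ∈ s, Function.Injective fun g : G => g • x) :
    (orbit G '' s).ncard * Nat.card G = s.ncard := by
  refine Set.ncard_image_mul_of_ncard_fiber hs fun a ha => ?_
  have hfiber : {x ∈ s | orbit G x = orbit G a} = orbit G a := by
    ext x
    rw [Set.mem_ofPred_eq, orbit_eq_iff]
    refine ⟨And.right, fun hx => ⟨?_, hx⟩⟩
    obtain ⟨g, rfl⟩ := hx
    exact hinv g a ha
  rw [hfiber, ← Set.ncard_range_of_injective (hfree a ha)]
  rfl

def coprimePairs (R : Type*) [CommSemiring R] : Set (R × R) := {x | IsCoprime x.1 x.2}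

theorem isCoprime_prod_iff {R S : Type*} [CommSemiring R] [CommSemiring S] {a b : R × S} :
    IsCoprime a b ↔ IsCoprime a.1 b.1 ∧ IsCoprime a.2 b.2 := by
  refine ⟨fun h => ⟨h.map (RingHom.fst R S), h.map (RingHom.snd R S)⟩, ?_⟩
  rintro ⟨⟨u₁, w₁, h₁⟩, ⟨u₂, w₂, h₂⟩⟩
  exact ⟨(u₁, u₂), (w₁, w₂), Prod.ext h₁ h₂⟩

theorem ncard_coprimePairs_prod (R S : Type*) [CommSemiring R] [CommSemiring S] :
    (coprimePairs (R × S)).ncard = (coprimePairs R).ncard * (coprimePairs S).ncard := by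
  rw [← Set.ncard_prod,
    ← Set.ncard_image_of_injective _ (Equiv.prodProdProdComm R S R S).injective]
  congr 1
  ext ⟨⟨a, b⟩, c, d⟩
  simp [coprimePairs, isCoprime_prod_iff]

theorem RingEquiv.ncard_coprimePairs {R S : Type*} [CommSemiring R] [CommSemiring S]
    (e : R ≃+* S) :
    (coprimePairs R).ncard = (coprimePairs S).ncard := by
  rw [← Set.ncard_image_of_injective _ (e.toEquiv.prodCongr e.toEquiv).injective]
  congr 1
  ext ⟨a, b⟩
  simp only [coprimePairs, Set.mem_image, Prod.exists, Equiv.prodCongr_apply,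
    Prod.map, Prod.mk.injEq]
  refine ⟨fun ⟨a', b', h, ha, hb⟩ => ha ▸ hb ▸ h.map (e : R →+* S), fun h => ?_⟩
  exact ⟨e.symm a, e.symm b, h.map (e.symm : S →+* R), by simp, by simp⟩

theorem IsLocalRing.isCoprime_iff_isUnit_or_isUnit {R : Type*} [CommRing R] [IsLocalRing R]
    {a b : R} :
    IsCoprime a b ↔ IsUnit a ∨ IsUnit b := by
  refine ⟨fun ⟨x, y, h⟩ => ?_, ?_⟩
  · exact (isUnit_or_isUnit_of_isUnit_add (h ▸ isUnit_one)).imp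
      isUnit_of_mul_isUnit_right isUnit_of_mul_isUnit_right
  · rintro (h | h)
    · exact ⟨↑h.unit⁻¹, 0, by simp⟩
    · exact ⟨0, ↑h.unit⁻¹, by simp⟩

theorem IsLocalRing.ncard_coprimePairs_add {R : Type*} [CommRing R] [IsLocalRing R] [Finite R] :
    (coprimePairs R).ncard + (nonunits R).ncard ^ 2 = Nat.card R ^ 2 := by
  have : coprimePairs R = (nonunits R ×ˢ nonunits R)ᶜ := by
    ext x
    simp [coprimePairs, IsLocalRing.isCoprime_iff_isUnit_or_isUnit, mem_nonunits_iff,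
      or_iff_not_imp_left]
  rw [this, sq, ← Set.ncard_prod, Set.ncard_compl, Nat.sub_add_cancel (Set.ncard_le_card _),
    Nat.card_prod, sq]

theorem ncard_nonunits_add_card_units (M : Type*) [Monoid M] [Finite M] :
    (nonunits M).ncard + Nat.card Mˣ = Nat.card M := by
  have : (nonunits M)ᶜ = Set.range ((↑) : Mˣ → M) := by
    ext x
    simp [mem_nonunits_iff, IsUnit]
  rw [← Set.ncard_range_of_injective Units.val_injective, ← this, Set.ncard_add_ncard_compl]

theorem ZMod.isLocalRing_prime_pow {p k : ℕ} [Fact p.Prime] (hk : k ≠ 0) :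
    IsLocalRing (ZMod (p ^ k)) :=
  have : Fact (1 < p ^ k) := ⟨Nat.one_lt_pow hk (Fact.out : p.Prime).one_lt⟩
  .of_surjective' (PadicInt.toZModPow k) (ZMod.ringHom_surjective _)

theorem ZMod.ncard_nonunits_prime_pow {p k : ℕ} (hp : p.Prime) (hk : k ≠ 0) :
    (nonunits (ZMod (p ^ k))).ncard = p ^ (k - 1) := by
  have : NeZero (p ^ k) := ⟨pow_ne_zero _ hp.ne_zero⟩
  have h := ncard_nonunits_add_card_units (ZMod (p ^ k))
  rw [Nat.card_eq_fintype_card, ZMod.card_units_eq_totient, Nat.totient_prime_pow hp (by omega),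
    Nat.card_zmod] at h
  obtain ⟨j, rfl⟩ := Nat.exists_eq_add_one_of_ne_zero hk
  have : p ^ j * (p - 1) + p ^ j = p ^ (j + 1) := by
    rw [pow_succ, ← Nat.mul_add_one, Nat.sub_add_cancel hp.one_le]
  simp only [add_tsub_cancel_right] at h ⊢
  omega

theorem ZMod.ncard_coprimePairs_prime_pow {p k : ℕ} (hp : p.Prime) (hk : k ≠ 0) :
    ((coprimePairs (ZMod (p ^ k))).ncard : ℚ) =
      ((p ^ k : ℕ) : ℚ) ^ 2 * (1 - (p : ℚ)⁻¹ ^ 2) := by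
  have : Fact p.Prime := ⟨hp⟩
  have := ZMod.isLocalRing_prime_pow (p := p) hk
  have h := IsLocalRing.ncard_coprimePairs_add (R := ZMod (p ^ k))
  rw [ZMod.ncard_nonunits_prime_pow hp hk, Nat.card_zmod] at h
  obtain ⟨j, rfl⟩ := Nat.exists_eq_add_one_of_ne_zero hk
  have hQ : ((coprimePairs (ZMod (p ^ (j + 1)))).ncard : ℚ) + ((p ^ j : ℕ) : ℚ) ^ 2 =
      ((p ^ (j + 1) : ℕ) : ℚ) ^ 2 := by
    exact_mod_cast h
  rw [eq_sub_of_add_eq hQ]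
  have : (p : ℚ) ≠ 0 := by exact_mod_cast hp.ne_zero
  field_simp
  push_cast
  ring

theorem ZMod.ncard_coprimePairs {n : ℕ} (hn : n ≠ 0) :
    ((coprimePairs (ZMod n)).ncard : ℚ) =
      (n : ℚ) ^ 2 * ∏ p ∈ n.primeFactors, (1 - (p : ℚ)⁻¹ ^ 2) := by
  induction n using Nat.recOnPosPrimePosCoprime with
  | zero => exact absurd rfl hn
  | one =>
    have : coprimePairs (ZMod 1) = Set.univ :=
      Set.eq_univ_of_forall fun _ => ⟨0, 0, Subsingleton.elim _ _⟩
    simp [this]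
  | prime_pow p k hp hk =>
    rw [ZMod.ncard_coprimePairs_prime_pow hp hk.ne', Nat.primeFactors_prime_pow hk.ne' hp,
      Finset.prod_singleton]
  | coprime a b ha hb hab iha ihb =>
    rw [(ZMod.chineseRemainder hab).ncard_coprimePairs, ncard_coprimePairs_prod,
      hab.primeFactors_mul, Finset.prod_union hab.disjoint_primeFactors, Nat.cast_mul,
      iha (by omega), ihb (by omega)]
    push_cast
    ring

theorem ZMod.ncard_coprimePairs_eq_totient_mul {n : ℕ} (hn : n ≠ 0) :
    ((coprimePairs (ZMod n)).ncard : ℚ) =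
      φ n * (n * ∏ p ∈ n.primeFactors, (1 + (p : ℚ)⁻¹)) := by
  rw [ZMod.ncard_coprimePairs hn, Nat.totient_eq_mul_prod_factors, mul_mul_mul_comm, ← sq,
    ← Finset.prod_mul_distrib]
  congr 1
  exact Finset.prod_congr rfl fun p _ => by ring

theorem eq_zero_of_smul_eq_zero_of_span_range_eq_top {R ι : Type*} [CommRing R] {v : ι → R}
    (hv : Ideal.span (Set.range v) = ⊤) {r : R} (h : r • v = 0) : r = 0 := by
  have : Ideal.span (Set.range v) ≤ LinearMap.ker (LinearMap.mulLeft R r) :=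
    Ideal.span_le.mpr <| Set.range_subset_iff.mpr fun i => congrFun h i
  simpa using this (hv ▸ Submodule.mem_top : (1 : R) ∈ Ideal.span (Set.range v))

theorem span_range_units_smul {R ι : Type*} [CommRing R] (u : Rˣ) (v : ι → R) :
    Ideal.span (Set.range (u • v)) = Ideal.span (Set.range v) := by
  refine le_antisymm (Ideal.span_le.mpr ?_) (Ideal.span_le.mpr ?_) <;> rintro _ ⟨i, rfl⟩
  · exact Ideal.mul_mem_left _ _ (Ideal.subset_span ⟨i, rfl⟩)
  · have : (u • v) i ∈ Ideal.span (Set.range (u • v)) := Ideal.subset_span ⟨i, rfl⟩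
    simpa [Units.smul_def] using Ideal.mul_mem_left _ (↑u⁻¹ : R) this

namespace IsPrimitiveVec

variable {t : ℕ} {v : Fin 4 → ZMod t}

theorem units_smul (hv : IsPrimitiveVec v) (u : (ZMod t)ˣ) : IsPrimitiveVec (u • v) :=
  (span_range_units_smul u v).trans hv

theorem smul_left_injective (hv : IsPrimitiveVec v) :
    Function.Injective fun u : (ZMod t)ˣ => u • v := fun u₁ u₂ h =>
  Units.ext <| sub_eq_zero.mp <| eq_zero_of_smul_eq_zero_of_span_range_eq_top hv <| by
    simpa [sub_smul, sub_eq_zero, Units.smul_def] using h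

end IsPrimitiveVec

theorem isPrimitiveVec_zero_a_zero_b_iff {t : ℕ} (a b : ZMod t) :
    IsPrimitiveVec ![0, a, 0, b] ↔ IsCoprime a b := by
  simp [IsPrimitiveVec, Matrix.range_cons, Ideal.span_insert, Ideal.sup_eq_top_iff_isCoprime,
    isCoprime_comm]

theorem isPrimitiveVec_a_zero_b_zero_iff {t : ℕ} (a b : ZMod t) :
    IsPrimitiveVec ![a, 0, b, 0] ↔ IsCoprime a b := by
  simp [IsPrimitiveVec, Matrix.range_cons, Ideal.span_insert, Ideal.sup_eq_top_iff_isCoprime,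
    isCoprime_comm]

def vanishingPrimitiveVecs (t : ℕ) : Set (Fin 4 → ZMod t) :=
  {v | IsPrimitiveVec v ∧ ((v 0 = 0 ∧ v 2 = 0) ∨ (v 1 = 0 ∧ v 3 = 0))}

theorem units_smul_mem_vanishingPrimitiveVecs {t : ℕ} (u : (ZMod t)ˣ) {v : Fin 4 → ZMod t}
    (hv : v ∈ vanishingPrimitiveVecs t) : u • v ∈ vanishingPrimitiveVecs t := by
  obtain ⟨hprim, hzero⟩ := hv
  refine ⟨hprim.units_smul u, ?_⟩
  simpa [Units.smul_def] using hzero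

theorem vanishingPrimitiveVecs_eq_union (t : ℕ) :
    vanishingPrimitiveVecs t =
      (fun x => ![0, x.1, 0, x.2]) '' coprimePairs (ZMod t) ∪
        (fun x => ![x.1, 0, x.2, 0]) '' coprimePairs (ZMod t) := by
  ext v
  constructor
  · rintro ⟨hv, ⟨h0, h2⟩ | ⟨h1, h3⟩⟩
    · have hv' : v = ![0, v 1, 0, v 3] := by ext i; fin_cases i <;> simp [h0, h2]
      rw [hv', isPrimitiveVec_zero_a_zero_b_iff] at hv
      exact Or.inl ⟨(v 1, v 3), hv, hv'.symm⟩
    · have hv' : v = ![v 0, 0, v 2, 0] := by ext i; fin_cases i <;> simp [h1, h3]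
      rw [hv', isPrimitiveVec_a_zero_b_zero_iff] at hv
      exact Or.inr ⟨(v 0, v 2), hv, hv'.symm⟩
  · rintro (⟨x, hx, rfl⟩ | ⟨x, hx, rfl⟩)
    · exact ⟨(isPrimitiveVec_zero_a_zero_b_iff _ _).mpr hx, Or.inl ⟨rfl, rfl⟩⟩
    · exact ⟨(isPrimitiveVec_a_zero_b_zero_iff _ _).mpr hx, Or.inr ⟨rfl, rfl⟩⟩

theorem ncard_vanishingPrimitiveVecs (t : ℕ) [NeZero t] [Nontrivial (ZMod t)] :
    (vanishingPrimitiveVecs t).ncard = 2 * (coprimePairs (ZMod t)).ncard := by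
  have hdisj : Disjoint ((fun x => ![0, x.1, 0, x.2]) '' coprimePairs (ZMod t))
      ((fun x => ![x.1, 0, x.2, 0]) '' coprimePairs (ZMod t)) := by
    rw [Set.disjoint_left]
    rintro _ ⟨x, hx, rfl⟩ ⟨y, -, hxy⟩
    have h1 : x.1 = 0 := (congrFun hxy 1).symm
    have h3 : x.2 = 0 := (congrFun hxy 3).symm
    have hx : IsCoprime x.1 x.2 := hx
    rw [h1, h3] at hx
    exact not_isCoprime_zero_zero hx
  rw [vanishingPrimitiveVecs_eq_union, Set.ncard_union_eq hdisj (Set.toFinite _) (Set.toFinite _),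
    Set.ncard_image_of_injective, Set.ncard_image_of_injective, two_mul]
  all_goals
    intro x y h
    simpa [Prod.ext_iff] using h

/-- For every integer `t ≥ 2`, the number of orbits of the scalar
multiplication action of `(ℤ/tℤ)ˣ` on the set of primitive vectors `(a,b,c,d) ∈ (ℤ/tℤ)⁴`
with `a = c = 0` or `b = d = 0` equals `2t · ∏_{p ∣ t prime} (1 + p⁻¹)`. -/
theorem card_orbits_primitive_vectors_vanishing (t : ℕ) (ht : 2 ≤ t) :
    ((Set.ncard {s : Set (Fin 4 → ZMod t) |
        ∃ v : Fin 4 → ZMod t, IsPrimitiveVec v ∧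
          ((v 0 = 0 ∧ v 2 = 0) ∨ (v 1 = 0 ∧ v 3 = 0)) ∧
          s = MulAction.orbit (ZMod t)ˣ v} : ℚ)) =
      2 * (t : ℚ) * ∏ p ∈ t.primeFactors, (1 + (p : ℚ)⁻¹) := by
  have : Fact (1 < t) := ⟨ht⟩
  have horbits : {s : Set (Fin 4 → ZMod t) | ∃ v : Fin 4 → ZMod t, IsPrimitiveVec v ∧
      ((v 0 = 0 ∧ v 2 = 0) ∨ (v 1 = 0 ∧ v 3 = 0)) ∧ s = MulAction.orbit (ZMod t)ˣ v} =
      orbit (ZMod t)ˣ '' vanishingPrimitiveVecs t := by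
    ext s
    simp [vanishingPrimitiveVecs, eq_comm, and_assoc]
  have hcount := ncard_image_orbit_mul_card (vanishingPrimitiveVecs t).toFinite
    (fun u _ hv => units_smul_mem_vanishingPrimitiveVecs u hv)
    (fun _ hv => hv.1.smul_left_injective)
  rw [ncard_vanishingPrimitiveVecs, Nat.card_eq_fintype_card, ZMod.card_units_eq_totient]
    at hcount
  have htotient : (φ t : ℚ) ≠ 0 := by exact_mod_cast (Nat.totient_pos.mpr (by omega)).ne'
  have hcountQ : ((orbit (ZMod t)ˣ '' vanishingPrimitiveVecs t).ncard : ℚ) * φ t =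
      2 * (coprimePairs (ZMod t)).ncard := by
    exact_mod_cast hcount
  refine mul_right_cancel₀ htotient ?_
  rw [horbits, hcountQ, ZMod.ncard_coprimePairs_eq_totient_mul (by omega)]
  ring
end

section
/- The symplectic group Sp(4,𝔽₂), i.e. the group of 4×4 matrices h over the field 𝔽₂ with two elements satisfying hᵀ J̄ h = J̄, where J̄ is the matrix over 𝔽₂ with rows (0,0,1,0), (0,0,0,1), (1,0,0,0), (0,1,0,0), is isomorphic to the symmetric group S₆ on six letters. -/
/-!
`S₆` permutes the coordinates of `𝔽₂⁶` preserving the dot product, hence acts on `E/⟨𝟙⟩`, where `E`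
is the even-weight subspace and `𝟙` the all-ones vector. The dot product induces on this
4-dimensional space a nondegenerate alternating form with Gram matrix `J̄` in a suitable basis, which
gives a homomorphism `S₆ → Sp(4,𝔽₂)`. It is injective because the class of `e_a + e_b` determines
the pair `{a, b}`. Conversely, the columns of a matrix in `Sp(4,𝔽₂)` form a symplectic basis: there
are `120` hyperbolic pairs `(e₁, f₁)` in `𝔽₂⁴` and `6` in the orthogonal complement of each, so
`|Sp(4,𝔽₂)| ≤ 720 = |S₆|`.
-/

open Matrix

/-- The subgroup of `GL(4,R)` preserving the bilinear form given by the matrix `A`,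
i.e. matrices `g` with `gᵀ A g = A`. -/
def symplOf {R : Type*} [CommRing R] (A : Matrix (Fin 4) (Fin 4) R) :
    Subgroup (GL (Fin 4) R) where
  carrier := {g | (g : Matrix (Fin 4) (Fin 4) R)ᵀ * A * (g : Matrix (Fin 4) (Fin 4) R) = A}
  one_mem' := by simp
  mul_mem' := by
    intro a b ha hb
    simp only [Set.mem_setOf_eq] at ha hb ⊢
    rw [Units.val_mul, transpose_mul]
    calc (b : Matrix (Fin 4) (Fin 4) R)ᵀ * (a : Matrix (Fin 4) (Fin 4) R)ᵀ * A *
          ((a : Matrix (Fin 4) (Fin 4) R) * (b : Matrix (Fin 4) (Fin 4) R))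
        = (b : Matrix (Fin 4) (Fin 4) R)ᵀ *
            ((a : Matrix (Fin 4) (Fin 4) R)ᵀ * A * (a : Matrix (Fin 4) (Fin 4) R)) *
            (b : Matrix (Fin 4) (Fin 4) R) := by noncomm_ring
      _ = A := by rw [ha, hb]
  inv_mem' := by
    intro a ha
    simp only [Set.mem_setOf_eq] at ha ⊢
    have h1 : ((a : Matrix (Fin 4) (Fin 4) R) * ((a⁻¹ : GL (Fin 4) R) : Matrix (Fin 4) (Fin 4) R)) = 1 :=
      Units.mul_inv a
    calc ((a⁻¹ : GL (Fin 4) R) : Matrix (Fin 4) (Fin 4) R)ᵀ * A *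
          ((a⁻¹ : GL (Fin 4) R) : Matrix (Fin 4) (Fin 4) R)
        = ((a⁻¹ : GL (Fin 4) R) : Matrix (Fin 4) (Fin 4) R)ᵀ *
            ((a : Matrix (Fin 4) (Fin 4) R)ᵀ * A * (a : Matrix (Fin 4) (Fin 4) R)) *
            ((a⁻¹ : GL (Fin 4) R) : Matrix (Fin 4) (Fin 4) R) := by rw [ha]
      _ = ((a : Matrix (Fin 4) (Fin 4) R) * ((a⁻¹ : GL (Fin 4) R) : Matrix (Fin 4) (Fin 4) R))ᵀ * A *
            ((a : Matrix (Fin 4) (Fin 4) R) * ((a⁻¹ : GL (Fin 4) R) : Matrix (Fin 4) (Fin 4) R)) := by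
          rw [transpose_mul]; noncomm_ring
      _ = A := by rw [h1]; simp

/-- The reduction of the symplectic form modulo 2. -/
def JbarF2 : Matrix (Fin 4) (Fin 4) (ZMod 2) :=
  !![0, 0, 1, 0; 0, 0, 0, 1; 1, 0, 0, 0; 0, 1, 0, 0]

/-- `Sp(4,𝔽₂)`: the group of `4 × 4` matrices `h` over `𝔽₂` with `hᵀ J̄ h = J̄`. -/
def Sp4F2 : Subgroup (GL (Fin 4) (ZMod 2)) := symplOf JbarF2

abbrev V4 := Fin 4 → ZMod 2
abbrev V6 := Fin 6 → ZMod 2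

def sympForm (x y : V4) : ZMod 2 := x 0 * y 2 + x 1 * y 3 + x 2 * y 0 + x 3 * y 1

lemma dotProduct_JbarF2_mulVec (x y : V4) : x ⬝ᵥ JbarF2 *ᵥ y = sympForm x y := by
  simp [JbarF2, sympForm, dotProduct, mulVec, Fin.sum_univ_four]

/-- Coordinates on `E/⟨𝟙⟩`, where `E ⊆ 𝔽₂⁶` is the even-weight subspace and `𝟙` the all-ones
vector: on `E`, `evenProj` is the quotient map and `evenLift` is the section whose values vanish at
`4`. The basis is chosen so that the dot product of `𝔽₂⁶` induces `sympForm`. -/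
def evenProj : V6 →ₗ[ZMod 2] V4 where
  toFun u := ![u 1 + u 5, u 0 + u 1 + u 2 + u 5, u 0 + u 5, u 2 + u 3]
  map_add' u v := by ext i; fin_cases i <;> dsimp <;> ring
  map_smul' c u := by ext i; fin_cases i <;> dsimp <;> ring

def evenLift : V4 →ₗ[ZMod 2] V6 where
  toFun x := ![x 0 + x 3, x 2 + x 3, x 1 + x 3, x 1, 0, x 0 + x 2 + x 3]
  map_add' x y := by ext i; fin_cases i <;> dsimp <;> ring
  map_smul' c x := by ext i; fin_cases i <;> dsimp <;> ring

lemma sum_evenLift : ∀ x : V4, ∑ i, evenLift x i = 0 := by decide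
lemma evenProj_evenLift : ∀ x : V4, evenProj (evenLift x) = x := by decide
lemma evenLift_evenProj : ∀ u : V6, ∑ i, u i = 0 →
    evenLift (evenProj u) = u + Function.const _ (u 4) := by decide
lemma evenProj_const : ∀ c : ZMod 2, evenProj (Function.const _ c) = 0 := by decide
set_option maxRecDepth 100000 in
lemma sympForm_evenProj : ∀ u v : V6, ∑ i, u i = 0 → ∑ i, v i = 0 →
    sympForm (evenProj u) (evenProj v) = u ⬝ᵥ v := by decide

lemma sum_comp_symm_eq_zero {ι M : Type*} [Fintype ι] [AddCommMonoid M] {u : ι → M}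
    (hu : ∑ i, u i = 0) (σ : Equiv.Perm ι) :
    ∑ i, (u ∘ σ.symm) i = 0 :=
  (Equiv.sum_comp σ.symm u).trans hu

lemma evenProj_evenLift_evenProj_comp {u : V6} (hu : ∑ i, u i = 0) (σ : Equiv.Perm (Fin 6)) :
    evenProj (evenLift (evenProj u) ∘ σ.symm) = evenProj (u ∘ σ.symm) := by
  rw [evenLift_evenProj u hu, Pi.add_comp, Function.const_comp, map_add, evenProj_const, add_zero]

def permRep : Equiv.Perm (Fin 6) →* Module.End (ZMod 2) V4 where
  toFun σ := evenProj ∘ₗ LinearMap.funLeft (ZMod 2) (ZMod 2) σ.symm ∘ₗ evenLift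
  map_one' := LinearMap.ext evenProj_evenLift
  map_mul' σ τ := LinearMap.ext fun x =>
    (evenProj_evenLift_evenProj_comp (sum_comp_symm_eq_zero (sum_evenLift x) τ) σ).symm

lemma permRep_apply (σ : Equiv.Perm (Fin 6)) (x : V4) :
    permRep σ x = evenProj (evenLift x ∘ σ.symm) := rfl

lemma sympForm_permRep (σ : Equiv.Perm (Fin 6)) (x y : V4) :
    sympForm (permRep σ x) (permRep σ y) = sympForm x y := by
  have hx := sum_evenLift x
  have hy := sum_evenLift y
  rw [permRep_apply, permRep_apply, sympForm_evenProj _ _ (sum_comp_symm_eq_zero hx σ)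
    (sum_comp_symm_eq_zero hy σ), comp_equiv_dotProduct_comp_equiv, ← sympForm_evenProj _ _ hx hy,
    evenProj_evenLift, evenProj_evenLift]

def pairClass (a b : Fin 6) : V4 := evenProj (Pi.single a 1 + Pi.single b 1)

lemma pairClass_eq_pairClass_iff : ∀ a b c d : Fin 6, a ≠ b →
    (pairClass a b = pairClass c d ↔ a = c ∧ b = d ∨ a = d ∧ b = c) := by
  decide

lemma permRep_pairClass (σ : Equiv.Perm (Fin 6)) (a b : Fin 6) :
    permRep σ (pairClass a b) = pairClass (σ a) (σ b) := by
  have hsum : ∑ i, (Pi.single a 1 + Pi.single b 1 : V6) i = 0 := by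
    simp only [Pi.add_apply, Finset.sum_add_distrib, Finset.sum_pi_single', Finset.mem_univ,
      if_true]
    decide
  rw [pairClass, permRep_apply, evenProj_evenLift_evenProj_comp hsum, pairClass, Pi.add_comp]
  simp only [Pi.single_comp_equiv, Equiv.symm_symm]

lemma permRep_injective : Function.Injective permRep := by
  intro σ τ h
  refine Equiv.ext fun a => ?_
  obtain ⟨b, c, hab, hac, hbc⟩ : ∃ b c, a ≠ b ∧ a ≠ c ∧ b ≠ c := by decide +revert
  have hpair : ∀ b, a ≠ b → (σ a = τ a ∧ σ b = τ b ∨ σ a = τ b ∧ σ b = τ a) := fun b hab =>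
    (pairClass_eq_pairClass_iff _ _ _ _ (σ.injective.ne hab)).1 <| by
      rw [← permRep_pairClass, ← permRep_pairClass, h]
  by_contra hne
  have hb := (hpair b hab).resolve_left (fun h => hne h.1)
  have hc := (hpair c hac).resolve_left (fun h => hne h.1)
  exact hbc (τ.injective (hb.1.symm.trans hc.1))

theorem Matrix.transpose_mul_mul_eq_self_iff {n R : Type*} [Fintype n] [DecidableEq n]
    [CommSemiring R] (A M : Matrix n n R) :
    Mᵀ * A * M = A ↔ ∀ x y : n → R, M *ᵥ x ⬝ᵥ A *ᵥ (M *ᵥ y) = x ⬝ᵥ A *ᵥ y := by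
  have key : ∀ x y : n → R, M *ᵥ x ⬝ᵥ A *ᵥ (M *ᵥ y) = x ⬝ᵥ (Mᵀ * A * M) *ᵥ y := by
    intro x y
    rw [← vecMul_transpose, mulVec_mulVec, dotProduct_mulVec, vecMul_vecMul, ← dotProduct_mulVec,
      Matrix.mul_assoc]
  refine ⟨fun h x y => by rw [key, h], fun h => ?_⟩
  ext i j
  have := h (Pi.single i 1) (Pi.single j 1)
  rw [key] at this
  simpa [mulVec_single_one, single_one_dotProduct] using this

lemma toMatrix'_permRep_mem_sp4F2 (σ : Equiv.Perm (Fin 6)) :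
    (LinearMap.toMatrix' (permRep σ))ᵀ * JbarF2 * LinearMap.toMatrix' (permRep σ) = JbarF2 :=
  (Matrix.transpose_mul_mul_eq_self_iff _ _).2 fun x y => by
    simp only [LinearMap.toMatrix'_mulVec, dotProduct_JbarF2_mulVec, sympForm_permRep]

def permToSp4F2 : Equiv.Perm (Fin 6) →* Sp4F2 :=
  (Matrix.GeneralLinearGroup.toLin.symm.toMonoidHom.comp permRep.toHomUnits).codRestrict Sp4F2
    toMatrix'_permRep_mem_sp4F2

lemma permToSp4F2_injective : Function.Injective permToSp4F2 := fun _ _ h =>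
  permRep_injective <| congrArg Units.val <| Matrix.GeneralLinearGroup.toLin.symm.injective <|
    congrArg Subtype.val h

abbrev OrthHyperbolicPair (a b : V4) : Type :=
  {q : V4 × V4 // sympForm a q.1 = 0 ∧ sympForm b q.1 = 0 ∧ sympForm a q.2 = 0 ∧
    sympForm b q.2 = 0 ∧ sympForm q.1 q.2 = 1}

abbrev SymplecticFrame : Type :=
  Σ p : {p : V4 × V4 // sympForm p.1 p.2 = 1}, OrthHyperbolicPair p.1.1 p.1.2

set_option maxRecDepth 10000 in
lemma card_hyperbolicPair : Fintype.card {p : V4 × V4 // sympForm p.1 p.2 = 1} = 120 := by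
  decide

set_option maxRecDepth 10000 in
lemma card_orthHyperbolicPair : ∀ a b : V4, sympForm a b = 1 →
    Fintype.card (OrthHyperbolicPair a b) = 6 := by
  decide

lemma card_symplecticFrame : Fintype.card SymplecticFrame = 720 := by
  rw [Fintype.card_sigma, Finset.sum_congr rfl fun p _ => card_orthHyperbolicPair _ _ p.2,
    Finset.sum_const, Finset.card_univ, card_hyperbolicPair]
  rfl

lemma sympForm_col_sp4F2 (g : Sp4F2) (i j : Fin 4) :
    sympForm ((g.1 : Matrix (Fin 4) (Fin 4) (ZMod 2)).col i)
      ((g.1 : Matrix (Fin 4) (Fin 4) (ZMod 2)).col j) = JbarF2 i j := by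
  have := (Matrix.transpose_mul_mul_eq_self_iff _ _).1 g.2 (Pi.single i 1) (Pi.single j 1)
  rwa [mulVec_single_one, mulVec_single_one, dotProduct_JbarF2_mulVec, mulVec_single_one,
    single_one_dotProduct, col_apply] at this

def Sp4F2.columnFrame (g : Sp4F2) : SymplecticFrame :=
  let c := (g.1 : Matrix (Fin 4) (Fin 4) (ZMod 2)).col
  ⟨⟨(c 0, c 2), by simp only [c, sympForm_col_sp4F2]; rfl⟩,
    ⟨(c 1, c 3), by simp only [c, sympForm_col_sp4F2]; decide⟩⟩

lemma Sp4F2.columnFrame_injective : Function.Injective Sp4F2.columnFrame := by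
  intro g h hgh
  have hcols := congrArg (fun F : SymplecticFrame => ![F.1.1.1, F.2.1.1, F.1.1.2, F.2.1.2]) hgh
  refine Subtype.ext <| Units.ext <| Matrix.ext_col fun j => ?_
  fin_cases j
  exacts [congrFun hcols 0, congrFun hcols 1, congrFun hcols 2, congrFun hcols 3]

lemma card_sp4F2_le : Nat.card Sp4F2 ≤ 720 := by
  have := Nat.card_le_card_of_injective _ Sp4F2.columnFrame_injective
  rwa [Nat.card_eq_fintype_card (α := SymplecticFrame), card_symplecticFrame] at this

/-- `Sp(4,𝔽₂)` is isomorphic to the symmetric group `S₆` on six letters. -/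
theorem sp4F2_iso_symmGroupSix : Nonempty (Sp4F2 ≃* Equiv.Perm (Fin 6)) := by
  have card_perm : Nat.card (Equiv.Perm (Fin 6)) = 720 := by
    rw [Nat.card_perm, Nat.card_fin]; rfl
  have card_eq : Nat.card (Equiv.Perm (Fin 6)) = Nat.card Sp4F2 :=
    le_antisymm (Nat.card_le_card_of_injective _ permToSp4F2_injective)
      (card_perm ▸ card_sp4F2_le)
  exact ⟨(MulEquiv.ofBijective permToSp4F2
    ((Nat.bijective_iff_injective_and_card _).2 ⟨permToSp4F2_injective, card_eq⟩)).symm⟩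
end

section
/- Let Γ₀(3) be the subgroup of SL(2,ℤ) consisting of matrices whose lower-left entry is divisible by 3, and let Γ₀⁽²⁾(3) be the subgroup of Γ₀(3) consisting of matrices congruent to the identity matrix modulo 2. Then Γ₀⁽²⁾(3) is a normal subgroup of Γ₀(3) and the quotient group Γ₀(3)/Γ₀⁽²⁾(3) is isomorphic to the symmetric group S₃ on three letters. -/
open CongruenceSubgroup

/-- `Γ₀⁽²⁾(3)`: the subgroup of `Γ₀(3)` of matrices congruent to the identity modulo `2`,
viewed as a subgroup of `Γ₀(3)`. -/
noncomputable def Gamma0TwoOfThree : Subgroup (Gamma0 3) :=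
  (Gamma0 3 ⊓ Gamma 2).subgroupOf (Gamma0 3)

open Matrix

local notation "SLMOD(" N ")" =>
  @Matrix.SpecialLinearGroup.map (Fin 2) _ _ _ _ _ _ (Int.castRingHom (ZMod N))

abbrev SL2F2 := Matrix.SpecialLinearGroup (Fin 2) (ZMod 2)

instance : DecidableEq SL2F2 := fun a b =>
  decidable_of_iff (a.1 = b.1) Subtype.ext_iff.symm

set_option maxHeartbeats 2000000

def vec3 : Fin 3 → (Fin 2 → ZMod 2) := ![![1,0], ![0,1], ![1,1]]

def idx3 (v : Fin 2 → ZMod 2) : Fin 3 :=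
  if v = ![1,0] then 0 else if v = ![0,1] then 1 else 2

def permFun (g : SL2F2) (i : Fin 3) : Fin 3 := idx3 (g.1.mulVec (vec3 i))

lemma permFun_left : ∀ g : SL2F2, ∀ i, permFun g⁻¹ (permFun g i) = i := by decide

lemma permFun_right : ∀ g : SL2F2, ∀ i, permFun g (permFun g⁻¹ i) = i := by decide

lemma permFun_one : ∀ i, permFun 1 i = i := by decide

lemma permFun_mul : ∀ g h : SL2F2, ∀ i, permFun (g * h) i = permFun g (permFun h i) := by decide

def F : SL2F2 →* Equiv.Perm (Fin 3) where
  toFun g := ⟨permFun g, permFun g⁻¹, permFun_left g, permFun_right g⟩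
  map_one' := Equiv.ext (permFun_one)
  map_mul' := fun g h => Equiv.ext (permFun_mul g h)

lemma F_inj' : ∀ g h : SL2F2, (∀ i, permFun g i = permFun h i) → g = h := by decide

lemma F_inj : Function.Injective F := fun g h hg => F_inj' g h (Equiv.ext_iff.1 hg)

lemma card_SL2F2 : Fintype.card SL2F2 = 6 := by decide

lemma F_surj : Function.Surjective F := by
  have := (Fintype.bijective_iff_injective_and_card F).2
    ⟨F_inj, by rw [card_SL2F2]; simp [Fintype.card_perm]; rfl⟩
  exact this.2

def Ms : Fin 6 → Gamma0 3 := ![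
  ⟨⟨!![1,0;0,1], by decide⟩, Gamma0_mem.mpr (by decide)⟩,
  ⟨⟨!![1,1;0,1], by decide⟩, Gamma0_mem.mpr (by decide)⟩,
  ⟨⟨!![1,0;3,1], by decide⟩, Gamma0_mem.mpr (by decide)⟩,
  ⟨⟨!![2,1;3,2], by decide⟩, Gamma0_mem.mpr (by decide)⟩,
  ⟨⟨!![4,1;3,1], by decide⟩, Gamma0_mem.mpr (by decide)⟩,
  ⟨⟨!![1,1;3,4], by decide⟩, Gamma0_mem.mpr (by decide)⟩]

lemma pre : ∀ g : SL2F2, ∃ j : Fin 6, SLMOD(2) ((Ms j : Gamma0 3) : Matrix.SpecialLinearGroup (Fin 2) ℤ) = g := by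
  decide

noncomputable def fG : Gamma0 3 →* Equiv.Perm (Fin 3) :=
  F.comp ((SLMOD(2)).comp (Gamma0 3).subtype)

lemma fG_surj : Function.Surjective fG := by
  intro σ
  obtain ⟨g, hg⟩ := F_surj σ
  obtain ⟨j, hj⟩ := pre g
  exact ⟨Ms j, by simp [fG, hj, hg]⟩

lemma fG_ker : fG.ker = (Gamma0 3 ⊓ Gamma 2).subgroupOf (Gamma0 3) := by
  ext x
  simp only [Subgroup.mem_subgroupOf, Subgroup.mem_inf, MonoidHom.mem_ker, fG,
    MonoidHom.comp_apply, Subgroup.coe_subtype, map_eq_one_iff F F_inj, ← Gamma_mem']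
  exact ⟨fun h => ⟨x.2, h⟩, fun h => h.2⟩


/-- `Γ₀⁽²⁾(3)` is a normal subgroup of `Γ₀(3)` and the quotient
`Γ₀(3)/Γ₀⁽²⁾(3)` is isomorphic to the symmetric group `S₃` on three letters.
(Equivalently: there is a surjective homomorphism `Γ₀(3) → S₃` whose kernel is
`Γ₀⁽²⁾(3)`.) -/
theorem gamma0_three_mod_two_quotient :
    Gamma0TwoOfThree.Normal ∧
      ∃ f : Gamma0 3 →* Equiv.Perm (Fin 3),
        Function.Surjective f ∧ f.ker = Gamma0TwoOfThree := by
  have hker : fG.ker = Gamma0TwoOfThree := fG_ker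
  exact ⟨hker ▸ fG.normal_ker, fG, fG_surj, hker⟩
end
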